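/- Let k ≥ 1, let b_1,…,b_k be integers with b_i ≥ 2 and c_1,…,c_k positive integers with c_1 ≤ c_2 ≤ … ≤ c_k, such that ∑_{i=1}^k ((b_i-1)/b_i)·c_i = 2 and ∑_{i=1}^k c_i = 3. Then the tuple (b_1,…,b_k; c_1,…,c_k) is one of: (3;3), (2,4;1,2), (3,3;1,2), (2,3,6;1,1,1), (2,4,4;1,1,1), (3,3,3;1,1,1), up to simultaneous permutation of the indices preserving the ordering of the c_i. -/

import Mathlib

/-!
Since `∑ cᵢ = 3`, the first equation says `∑ cᵢ / bᵢ = 1`. The `cᵢ` are positive, so they form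
one of the partitions `3`, `1 + 2`, `1 + 1 + 1` of `3`, and what is left are the unit fraction
equations `3 / b = 1`, `1 / x + 2 / y = 1` (i.e. `(x - 1) (y - 2) = 2`) and
`1 / x + 1 / y + 1 / z = 1`, whose solutions with `x, y, z ≥ 2` are all bounded by `6`.
-/

open Finset

theorem sum_sub_one_div_mul_eq {ι : Type*} (s : Finset ι) (b c : ι → ℚ)
    (hb : ∀ i ∈ s, b i ≠ 0) :
    ∑ i ∈ s, (b i - 1) / b i * c i = ∑ i ∈ s, c i - ∑ i ∈ s, c i / b i := by
  rw [← sum_sub_distrib]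
  refine sum_congr rfl fun i hi => ?_
  field_simp [hb i hi]

theorem eq_of_one_div_add_two_div_eq_one {x y : ℤ} (hx : 2 ≤ x) (hy : 2 ≤ y)
    (h : 1 / (x : ℚ) + 2 / y = 1) : x = 2 ∧ y = 4 ∨ x = 3 ∧ y = 3 := by
  have hxy : (x - 1) * (y - 2) = 2 := by
    have : (y : ℚ) + 2 * x = x * y := by
      field_simp at h
      linarith
    linear_combination (by exact_mod_cast this : y + 2 * x = x * y).symm
  have hx3 : x ≤ 3 := by linarith [Int.le_of_dvd (by norm_num) (Dvd.intro _ hxy)]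
  have hy4 : y ≤ 4 := by linarith [Int.le_of_dvd (by norm_num) (Dvd.intro_left _ hxy)]
  interval_cases x <;> interval_cases y <;> omega

theorem le_six_of_mul_add_mul_add_mul_eq {x y z : ℤ} (hx : 2 ≤ x) (hy : 2 ≤ y) (hz : 2 ≤ z)
    (h : y * z + x * z + x * y = x * y * z) : x ≤ 6 := by
  rcases hy.eq_or_lt with rfl | hy3
  · have : (x - 2) * (z - 2) = 4 := by linear_combination -h
    linarith [Int.le_of_dvd (by norm_num) (Dvd.intro _ this)]
  rcases hz.eq_or_lt with rfl | hz3
  · have : (x - 2) * (y - 2) = 4 := by linear_combination -h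
    linarith [Int.le_of_dvd (by norm_num) (Dvd.intro _ this)]
  -- for `y, z ≥ 3` the equation `x * (y * z - y - z) = y * z` forces `x ≤ 3`
  nlinarith [mul_pos (by omega : (0:ℤ) < y - 2) (by omega : (0:ℤ) < z - 2)]

theorem eq_of_one_div_add_one_div_add_one_div_eq_one {x y z : ℤ}
    (hx : 2 ≤ x) (hy : 2 ≤ y) (hz : 2 ≤ z) (h : 1 / (x : ℚ) + 1 / y + 1 / z = 1) :
    ({x, y, z} : Multiset ℤ) = {2, 3, 6} ∨ ({x, y, z} : Multiset ℤ) = {2, 4, 4} ∨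
      ({x, y, z} : Multiset ℤ) = {3, 3, 3} := by
  have hxyz : y * z + x * z + x * y = x * y * z := by
    have : (y : ℚ) * z + x * z + x * y = x * y * z := by
      field_simp at h
      linarith
    exact_mod_cast this
  have hx6 := le_six_of_mul_add_mul_add_mul_eq hx hy hz hxyz
  have hy6 := le_six_of_mul_add_mul_add_mul_eq hy hx hz (by linear_combination hxyz)
  have hz6 := le_six_of_mul_add_mul_add_mul_eq hz hx hy (by linear_combination hxyz)
  interval_cases x <;> interval_cases y <;> interval_cases z <;> revert hxyz <;> decide

def ramificationData {k : ℕ} (b c : Fin k → ℤ) : Multiset (ℤ × ℤ) :=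
  Multiset.map (fun i => (b i, c i)) Finset.univ.val

theorem ramificationData_of_card_one (b c : Fin 1 → ℤ) (hrec : ∑ i, (c i : ℚ) / b i = 1)
    (hdeg : ∑ i, c i = 3) : ramificationData b c = {(3, 3)} := by
  rw [Fin.sum_univ_one] at hrec hdeg
  -- `b 0 ≠ 0` because `3 / 0 = 0` in `ℚ`
  rw [hdeg, div_eq_one_iff_eq (by rintro h; norm_num [h] at hrec)] at hrec
  have hb0 : b 0 = 3 := by exact_mod_cast hrec.symm
  change {(b 0, c 0)} = _
  rw [hdeg, hb0]

theorem ramificationData_of_card_two (b c : Fin 2 → ℤ) (hb : ∀ i, 2 ≤ b i) (hc : ∀ i, 0 < c i)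
    (hmono : c 0 ≤ c 1) (hrec : ∑ i, (c i : ℚ) / b i = 1) (hdeg : ∑ i, c i = 3) :
    ramificationData b c = {(2, 1), (4, 2)} ∨ ramificationData b c = {(3, 1), (3, 2)} := by
  rw [Fin.sum_univ_two] at hrec hdeg
  obtain ⟨hc0, hc1⟩ : c 0 = 1 ∧ c 1 = 2 := by have := hc 0; omega
  rw [hc0, hc1, Int.cast_one, Int.cast_two] at hrec
  change {(b 0, c 0), (b 1, c 1)} = _ ∨ {(b 0, c 0), (b 1, c 1)} = _
  rcases eq_of_one_div_add_two_div_eq_one (hb 0) (hb 1) hrec with ⟨h0, h1⟩ | ⟨h0, h1⟩ <;>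
    simp [h0, h1, hc0, hc1]

theorem ramificationData_of_card_three (b c : Fin 3 → ℤ) (hb : ∀ i, 2 ≤ b i)
    (hc : ∀ i, 0 < c i) (hrec : ∑ i, (c i : ℚ) / b i = 1) (hdeg : ∑ i, c i = 3) :
    ramificationData b c = {(2, 1), (3, 1), (6, 1)} ∨
      ramificationData b c = {(2, 1), (4, 1), (4, 1)} ∨
      ramificationData b c = {(3, 1), (3, 1), (3, 1)} := by
  rw [Fin.sum_univ_three] at hrec hdeg
  obtain ⟨hc0, hc1, hc2⟩ : c 0 = 1 ∧ c 1 = 1 ∧ c 2 = 1 := by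
    have := hc 0; have := hc 1; have := hc 2; omega
  rw [hc0, hc1, hc2, Int.cast_one] at hrec
  have hmap : ramificationData b c = Multiset.map (·, (1 : ℤ)) {b 0, b 1, b 2} := by
    change {(b 0, c 0), (b 1, c 1), (b 2, c 2)} = _
    rw [hc0, hc1, hc2]
    rfl
  rw [hmap]
  rcases eq_of_one_div_add_one_div_add_one_div_eq_one (hb 0) (hb 1) (hb 2) hrec with h | h | h <;>
    rw [h] <;> simp

theorem stmt_3_general (k : ℕ) (b c : Fin k → ℤ)
    (hb : ∀ i, 2 ≤ b i) (hc : ∀ i, 0 < c i)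
    (hmono : ∀ i j : Fin k, i ≤ j → c i ≤ c j)
    (hsum : ∑ i, (((b i : ℚ) - 1) / (b i)) * (c i) = 2)
    (hdeg : ∑ i, c i = 3) :
    Multiset.map (fun i => (b i, c i)) Finset.univ.val =
        ({((3 : ℤ), (3 : ℤ))} : Multiset (ℤ × ℤ)) ∨
    Multiset.map (fun i => (b i, c i)) Finset.univ.val = {(2, 1), (4, 2)} ∨
    Multiset.map (fun i => (b i, c i)) Finset.univ.val = {(3, 1), (3, 2)} ∨
    Multiset.map (fun i => (b i, c i)) Finset.univ.val = {(2, 1), (3, 1), (6, 1)} ∨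
    Multiset.map (fun i => (b i, c i)) Finset.univ.val = {(2, 1), (4, 1), (4, 1)} ∨
    Multiset.map (fun i => (b i, c i)) Finset.univ.val = {(3, 1), (3, 1), (3, 1)} := by
  have hrec : ∑ i, (c i : ℚ) / b i = 1 := by
    have hb0 : ∀ i ∈ univ, (b i : ℚ) ≠ 0 := fun i _ => by
      exact_mod_cast (by linarith [hb i] : b i ≠ 0)
    have hdegℚ : ∑ i, (c i : ℚ) = 3 := by exact_mod_cast hdeg
    rw [sum_sub_one_div_mul_eq _ _ _ hb0, hdegℚ] at hsum
    linarith
  have hk3 : k ≤ 3 := by simpa [hdeg] using card_nsmul_le_sum univ c 1 fun i _ => hc i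
  interval_cases k
  · simp at hdeg
  · exact Or.inl (ramificationData_of_card_one b c hrec hdeg)
  · have := ramificationData_of_card_two b c hb hc (hmono 0 1 (by decide)) hrec hdeg
    tauto
  · have := ramificationData_of_card_three b c hb hc hrec hdeg
    tauto

theorem stmt_3 (k : ℕ) (hk : 1 ≤ k) (b c : Fin k → ℤ)
    (hb : ∀ i, 2 ≤ b i) (hc : ∀ i, 0 < c i)
    (hmono : ∀ i j : Fin k, i ≤ j → c i ≤ c j)
    (hsum : ∑ i, (((b i : ℚ) - 1) / (b i)) * (c i) = 2)
    (hdeg : ∑ i, c i = 3) :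
    Multiset.map (fun i => (b i, c i)) Finset.univ.val =
        ({((3 : ℤ), (3 : ℤ))} : Multiset (ℤ × ℤ)) ∨
    Multiset.map (fun i => (b i, c i)) Finset.univ.val = {(2, 1), (4, 2)} ∨
    Multiset.map (fun i => (b i, c i)) Finset.univ.val = {(3, 1), (3, 2)} ∨
    Multiset.map (fun i => (b i, c i)) Finset.univ.val = {(2, 1), (3, 1), (6, 1)} ∨
    Multiset.map (fun i => (b i, c i)) Finset.univ.val = {(2, 1), (4, 1), (4, 1)} ∨
    Multiset.map (fun i => (b i, c i)) Finset.univ.val = {(3, 1), (3, 1), (3, 1)} :=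
  stmt_3_general k b c hb hc hmono hsum hdeg
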